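/- For all complex numbers x₁, x₂, x₃, x₄, y₁, y₂, y₃, y₄ the following two conditions are equivalent: (i) rank A₁(x,y) ≤ 1 and rank A₂(x,y) ≤ 1; (ii) rank A₁(x,y) ≤ 1 and the three determinants det !![x₁,x₃; y₄,y₂], det !![x₁,x₃; y₃,y₁], det !![x₂,x₄; y₃,y₁] all vanish. -/

import Mathlib

/-!
A matrix with two columns has rank at most one iff all its `2 × 2` minors vanish. Of the six
minors of `A₂`, two are minors of `A₁` and three are the given determinants; the last one,
`x₂y₂ - x₄y₄`, equals `(x₁y₁ - x₃y₃) - (x₁y₁ - x₂y₂) + (x₃y₃ - x₄y₄)`, a combination of a given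
determinant and two minors of `A₁`.
-/

open Matrix

/-- The 4×2 matrix `A₁(x,y)` with rows `(x₁,x₂), (x₃,x₄), (y₂,y₁), (y₄,y₃)`. -/
def A1 (x₁ x₂ x₃ x₄ y₁ y₂ y₃ y₄ : ℂ) : Matrix (Fin 4) (Fin 2) ℂ :=
  !![x₁, x₂; x₃, x₄; y₂, y₁; y₄, y₃]

/-- The 4×2 matrix `A₂(x,y)` with rows `(x₁,x₃), (x₂,x₄), (y₃,y₁), (y₄,y₂)`. -/
def A2 (x₁ x₂ x₃ x₄ y₁ y₂ y₃ y₄ : ℂ) : Matrix (Fin 4) (Fin 2) ℂ :=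
  !![x₁, x₃; x₂, x₄; y₃, y₁; y₄, y₂]

theorem Matrix.det_submatrix_pair {m R : Type*} [CommRing R] (M : Matrix m (Fin 2) R) (i j : m) :
    (M.submatrix ![i, j] id).det = M i 0 * M j 1 - M i 1 * M j 0 := by
  rw [det_fin_two]
  rfl

theorem Matrix.rank_le_one_iff_det_submatrix_eq_zero {m K : Type*} [Field K]
    (M : Matrix m (Fin 2) K) :
    M.rank ≤ 1 ↔ ∀ i j, (M.submatrix ![i, j] id).det = 0 := by
  refine ⟨fun h i j => ?_, fun h => ?_⟩
  · by_contra hdet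
    have := rank_submatrix_le M ![i, j] id
    rw [rank_of_det_ne_zero hdet, Fintype.card_fin] at this
    omega
  · obtain ⟨w, v, rfl⟩ : ∃ w v, M = vecMulVec w v := by
      by_cases hcol : ∀ i, M i 0 = 0
      · refine ⟨fun i => M i 1, ![0, 1], ?_⟩
        ext i k
        fin_cases k <;> simp [vecMulVec_apply, hcol]
      · push Not at hcol
        obtain ⟨i, hi⟩ := hcol
        refine ⟨fun j => M j 0, ![1, M i 1 / M i 0], ?_⟩
        ext j k
        have hij := h i j
        rw [det_submatrix_pair] at hij
        fin_cases k <;> simp [vecMulVec_apply]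
        field_simp
        linear_combination hij
    exact rank_vecMulVec_le w v

theorem rank_A2_le_one_iff_of_rank_A1_le_one (x₁ x₂ x₃ x₄ y₁ y₂ y₃ y₄ : ℂ)
    (h : (A1 x₁ x₂ x₃ x₄ y₁ y₂ y₃ y₄).rank ≤ 1) :
    (A2 x₁ x₂ x₃ x₄ y₁ y₂ y₃ y₄).rank ≤ 1 ↔
      (!![x₁, x₃; y₄, y₂] : Matrix (Fin 2) (Fin 2) ℂ).det = 0 ∧
        (!![x₁, x₃; y₃, y₁] : Matrix (Fin 2) (Fin 2) ℂ).det = 0 ∧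
        (!![x₂, x₄; y₃, y₁] : Matrix (Fin 2) (Fin 2) ℂ).det = 0 := by
  simp only [rank_le_one_iff_det_submatrix_eq_zero, det_submatrix_pair, det_fin_two_of] at h ⊢
  refine ⟨fun h₂ => ⟨h₂ 0 3, h₂ 0 2, h₂ 1 2⟩, fun ⟨d₀₃, d₀₂, d₁₂⟩ i j => ?_⟩
  have e₀₁ := h 0 1
  have e₀₂ := h 0 2
  have e₁₃ := h 1 3
  have e₂₃ := h 2 3
  simp only [A1, of_apply, cons_val, cons_val_zero, cons_val_one] at e₀₁ e₀₂ e₁₃ e₂₃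
  have d₁₃ : x₂ * y₂ - x₄ * y₄ = 0 := by linear_combination d₀₂ - e₀₂ + e₁₃
  fin_cases i <;> fin_cases j <;> simp [A2] <;> grind

theorem stmt0 (x₁ x₂ x₃ x₄ y₁ y₂ y₃ y₄ : ℂ) :
    ((A1 x₁ x₂ x₃ x₄ y₁ y₂ y₃ y₄).rank ≤ 1 ∧ (A2 x₁ x₂ x₃ x₄ y₁ y₂ y₃ y₄).rank ≤ 1) ↔
      ((A1 x₁ x₂ x₃ x₄ y₁ y₂ y₃ y₄).rank ≤ 1 ∧
        (!![x₁, x₃; y₄, y₂] : Matrix (Fin 2) (Fin 2) ℂ).det = 0 ∧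
        (!![x₁, x₃; y₃, y₁] : Matrix (Fin 2) (Fin 2) ℂ).det = 0 ∧
        (!![x₂, x₄; y₃, y₁] : Matrix (Fin 2) (Fin 2) ℂ).det = 0) :=
  and_congr_right (rank_A2_le_one_iff_of_rank_A1_le_one x₁ x₂ x₃ x₄ y₁ y₂ y₃ y₄)
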